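/- arXiv:1705.09520 — 2 statements merged into one kernel-verified Lean document; each statement's English description precedes it below -/
import Mathlib

section
/- Two-grid convergence criterion: Let $K_l, K_{l-1}$ be invertible operators on normed spaces, $S_l$ a smoothing operator, $P$ a prolongation, and $R$ a restriction. If the smoothing property $\|K_l S_l^{\nu}\| \le \eta(\nu)$ and the approximation property $\|K_l^{-1} - P K_{l-1}^{-1} R\| \le C_A$ hold, then the two-grid iteration operator $Q(\nu, 0) = (K_l^{-1} - P K_{l-1}^{-1} R)(K_l S_l^{\nu})$ satisfies $\|Q(\nu,0)\| \le C_A \eta(\nu)$; in particular, if $C_A \eta(\nu) < 1$ the two-grid method converges monotonically. -/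
/-- Hackbusch's two-grid convergence criterion: if the smoothing property
`‖K_l ∘ S^ν‖ ≤ η` and the approximation property `‖K_l⁻¹ - P K_{l-1}⁻¹ R‖ ≤ C_A` hold,
then the two-grid operator `Q = (K_l⁻¹ - P K_{l-1}⁻¹ R) ∘ (K_l ∘ S^ν)` satisfies
`‖Q‖ ≤ C_A η`; in particular `‖Q‖ < 1` when `C_A η < 1`. -/
theorem two_grid_convergence
    {U F Uc Fc : Type*}
    [NormedAddCommGroup U] [NormedSpace ℝ U] [NormedAddCommGroup F] [NormedSpace ℝ F]
    [NormedAddCommGroup Uc] [NormedSpace ℝ Uc] [NormedAddCommGroup Fc] [NormedSpace ℝ Fc]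
    (K : U →L[ℝ] F) (Kinv : F →L[ℝ] U)
    (Kc : Uc →L[ℝ] Fc) (Kcinv : Fc →L[ℝ] Uc)
    (P : Uc →L[ℝ] U) (R : F →L[ℝ] Fc) (S : U →L[ℝ] U)
    (ν : ℕ) (η C_A : ℝ)
    (hK : K.comp Kinv = ContinuousLinearMap.id ℝ F)
    (hK' : Kinv.comp K = ContinuousLinearMap.id ℝ U)
    (hKc : Kc.comp Kcinv = ContinuousLinearMap.id ℝ Fc)
    (hKc' : Kcinv.comp Kc = ContinuousLinearMap.id ℝ Uc)
    (hsmooth : ‖K.comp (S ^ ν)‖ ≤ η)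
    (happrox : ‖Kinv - P.comp (Kcinv.comp R)‖ ≤ C_A) :
    ‖(Kinv - P.comp (Kcinv.comp R)).comp (K.comp (S ^ ν))‖ ≤ C_A * η ∧
    (C_A * η < 1 → ‖(Kinv - P.comp (Kcinv.comp R)).comp (K.comp (S ^ ν))‖ < 1) := by
  have h1 : ‖(Kinv - P.comp (Kcinv.comp R)).comp (K.comp (S ^ ν))‖ ≤ C_A * η := by
    calc ‖(Kinv - P.comp (Kcinv.comp R)).comp (K.comp (S ^ ν))‖
        ≤ ‖Kinv - P.comp (Kcinv.comp R)‖ * ‖K.comp (S ^ ν)‖ :=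
          ContinuousLinearMap.opNorm_comp_le _ _
      _ ≤ C_A * η := by
          apply mul_le_mul happrox hsmooth (norm_nonneg _)
          exact le_trans (norm_nonneg _) happrox
  exact ⟨h1, fun h => lt_of_le_of_lt h1 h⟩
end

section
/- The kernel coefficient $\mathscr{G}^{hh}_{i,i',j,j'} = \int_{x_{i'}-h/2}^{x_{i'}+h/2} \int_{y_{j'}-h/2}^{y_{j'}+h/2} \frac{dx' dy'}{\sqrt{(x_i - x')^2 + (y_j - y')^2}}$ equals the closed form $|x_+| \sinh^{-1}(y_+/x_+) + |y_+| \sinh^{-1}(x_+/y_+) - |x_-| \sinh^{-1}(y_+/x_-) - |y_+| \sinh^{-1}(x_- /y_+) - |x_+| \sinh^{-1}(y_- /x_+) - |y_-| \sinh^{-1}(x_+/y_-) + |x_-| \sinh^{-1}(y_- /x_-) + |y_-| \sinh^{-1}(x_- /y_-)$, where $x_{\pm} = x_i - x_{i'} \pm h/2$ and $y_{\pm} = y_j - y_{j'} \pm h/2$, whenever all $x_\pm, y_\pm$ are nonzero. -/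
/-!
Integrating first in `y'`, `d/dt arsinh (t / |a|) = 1 / √(a² + t²)` turns the kernel into
`arsinh (y₊ / |x|) - arsinh (y₋ / |x|)` with `x = xi - x'`. In turn `arsinh (y / |x|)` is the
`x`-derivative of `|x| arsinh (y / x) + |y| arsinh (x / y)` away from `x = 0`. At `x = 0` the
integrand has a logarithmic singularity, but `|x| arsinh (y / x) → 0` because
`|arsinh (y / x)| = log (|y| + √(x² + y²)) - log |x|`, so the primitive stays continuous and the
fundamental theorem of calculus applies off the single point `0`.
-/

open Real MeasureTheory intervalIntegral Set Filter Topology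

-- `∂ₓ∂ᵧ kernelAntideriv x y = 1 / √(x² + y²)`; on the axes the junk value `t / 0 = 0` agrees with
-- the continuous extension.
noncomputable def kernelAntideriv (x y : ℝ) : ℝ :=
  |x| * arsinh (y / x) + |y| * arsinh (x / y)

lemma sqrt_one_add_div_sq (b : ℝ) {a : ℝ} (ha : a ≠ 0) :
    √(1 + (b / a) ^ 2) = √(a ^ 2 + b ^ 2) / |a| := by
  rw [eq_div_iff (abs_ne_zero.2 ha), ← sqrt_sq_eq_abs, ← sqrt_mul (by positivity)]
  congr 1
  field_simp

lemma abs_arsinh (x : ℝ) : |arsinh x| = arsinh |x| := by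
  rcases le_or_gt 0 x with hx | hx
  · rw [abs_of_nonneg hx, abs_of_nonneg (arsinh_nonneg_iff.2 hx)]
  · rw [abs_of_neg hx, abs_of_neg (arsinh_neg_iff.2 hx), arsinh_neg]

lemma abs_arsinh_div (y : ℝ) {x : ℝ} (hx : x ≠ 0) :
    |arsinh (y / x)| = log (|y| + √(x ^ 2 + y ^ 2)) - log |x| := by
  have hx' : 0 < |x| := abs_pos.2 hx
  rw [abs_arsinh, abs_div, arsinh, ← log_div (by positivity) hx'.ne', sqrt_one_add_div_sq _ hx'.ne',
    abs_abs, sq_abs, sq_abs, add_div]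

lemma hasDerivAt_arsinh_div_abs {a : ℝ} (ha : a ≠ 0) (t : ℝ) :
    HasDerivAt (fun t => arsinh (t / |a|)) (1 / √(a ^ 2 + t ^ 2)) t := by
  convert ((hasDerivAt_id' t).div_const |a|).arsinh using 1
  rw [sqrt_one_add_div_sq _ (abs_ne_zero.2 ha), sq_abs, abs_abs, smul_eq_mul]
  field_simp

lemma integral_one_div_sqrt_sq_add_sq {a : ℝ} (ha : a ≠ 0) (s t : ℝ) :
    ∫ u in s..t, 1 / √(a ^ 2 + u ^ 2) = arsinh (t / |a|) - arsinh (s / |a|) := by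
  refine integral_eq_sub_of_hasDerivAt (fun u _ => hasDerivAt_arsinh_div_abs ha u)
    (Continuous.intervalIntegrable ?_ s t)
  exact continuous_const.div (by fun_prop) fun u => (sqrt_pos.2 (by positivity)).ne'

lemma sign_mul_arsinh_div {x : ℝ} (hx : x ≠ 0) (y : ℝ) :
    (SignType.sign x : ℝ) * arsinh (y / x) = arsinh (y / |x|) := by
  rcases hx.lt_or_gt with hx | hx
  · simp [hx, abs_of_neg hx, div_neg, arsinh_neg]
  · simp [hx, abs_of_pos hx]

lemma hasDerivAt_kernelAntideriv_left {x y : ℝ} (hx : x ≠ 0) (hy : y ≠ 0) :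
    HasDerivAt (fun x => kernelAntideriv x y) (arsinh (y / |x|)) x := by
  have hquot : HasDerivAt (fun x => y / x) (-y / x ^ 2) x := by
    simpa [div_eq_mul_inv] using (hasDerivAt_inv hx).const_mul y
  have hterm₁ : HasDerivAt (fun x => |x| * arsinh (y / x))
      (SignType.sign x * arsinh (y / x) + |x| * ((√(1 + (y / x) ^ 2))⁻¹ * (-y / x ^ 2))) x :=
    (hasDerivAt_abs hx).mul hquot.arsinh
  have hterm₂ : HasDerivAt (fun x => |y| * arsinh (x / y))
      (|y| * ((√(1 + (x / y) ^ 2))⁻¹ * (1 / y))) x :=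
    (((hasDerivAt_id' x).div_const y).arsinh).const_mul |y|
  refine (hterm₁.add hterm₂).congr_deriv ?_
  rw [← sign_mul_arsinh_div hx, sqrt_one_add_div_sq _ hx, sqrt_one_add_div_sq _ hy,
    add_comm (y ^ 2)]
  field_simp
  rw [sq_abs, sq_abs]
  ring

lemma tendsto_abs_mul_arsinh_div_nhds_zero {y : ℝ} (hy : y ≠ 0) :
    Tendsto (fun x => |x| * arsinh (y / x)) (𝓝 0) (𝓝 0) := by
  have hnorm : ∀ x : ℝ, ‖|x| * arsinh (y / x)‖ =
      |x| * log (|y| + √(x ^ 2 + y ^ 2)) - |x| * log |x| := fun x => by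
    rcases eq_or_ne x 0 with rfl | hx
    · simp
    · rw [Real.norm_eq_abs, abs_mul, abs_abs, abs_arsinh_div y hx, mul_sub]
  have hbound : Continuous fun x : ℝ => |x| * log (|y| + √(x ^ 2 + y ^ 2)) - |x| * log |x| := by
    refine (continuous_abs.mul (Continuous.log (by fun_prop) fun x => ?_)).sub
      (continuous_mul_log.comp continuous_abs)
    exact (add_pos_of_pos_of_nonneg (abs_pos.2 hy) (sqrt_nonneg _)).ne'
  rw [tendsto_zero_iff_norm_tendsto_zero, funext hnorm]
  simpa using hbound.tendsto 0

lemma continuous_kernelAntideriv_left {y : ℝ} (hy : y ≠ 0) :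
    Continuous fun x => kernelAntideriv x y := by
  refine continuous_iff_continuousAt.2 fun x => ?_
  rcases eq_or_ne x 0 with rfl | hx
  · have hcont : Continuous fun x => |y| * arsinh (x / y) :=
      continuous_const.mul (continuous_id.div_const y).arsinh
    have h := (tendsto_abs_mul_arsinh_div_nhds_zero hy).add (hcont.tendsto 0)
    simpa [ContinuousAt, kernelAntideriv] using h
  · exact (hasDerivAt_kernelAntideriv_left hx hy).continuousAt

lemma intervalIntegrable_arsinh_div_abs (y a b : ℝ) :
    IntervalIntegrable (fun x => arsinh (y / |x|)) volume a b := by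
  rcases eq_or_ne y 0 with rfl | hy
  · simp
  have hbound : IntervalIntegrable (fun x => log (|y| + √(x ^ 2 + y ^ 2)) - log x) volume a b := by
    refine ((Continuous.log (by fun_prop) fun x => ?_).intervalIntegrable a b).sub
      intervalIntegrable_log'
    exact (add_pos_of_pos_of_nonneg (abs_pos.2 hy) (sqrt_nonneg _)).ne'
  have hmeas : Measurable fun x => arsinh (y / |x|) :=
    continuous_arsinh.measurable.comp (measurable_const.div measurable_abs)
  refine hbound.mono_fun' hmeas.aestronglyMeasurable ?_
  filter_upwards [ae_restrict_of_ae (Measure.ae_ne volume 0)] with x hx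
  rw [Real.norm_eq_abs, abs_arsinh_div y (abs_ne_zero.2 hx), sq_abs, abs_abs, log_abs]

lemma integral_arsinh_div_abs (y a b : ℝ) :
    ∫ x in a..b, arsinh (y / |x|) = kernelAntideriv b y - kernelAntideriv a y := by
  rcases eq_or_ne y 0 with rfl | hy
  · simp [kernelAntideriv]
  refine integral_eq_of_hasDerivAt_off_countable _ _ (countable_singleton 0)
    (continuous_kernelAntideriv_left hy).continuousOn (fun x hx => ?_)
    (intervalIntegrable_arsinh_div_abs y a b)
  exact hasDerivAt_kernelAntideriv_left hx.2 hy

theorem kernel_integral_closed_form_general (xi yj xi' yj' h : ℝ)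
    (xp xm yp ym : ℝ)
    (hxp : xp = xi - xi' + h / 2) (hxm : xm = xi - xi' - h / 2)
    (hyp : yp = yj - yj' + h / 2) (hym : ym = yj - yj' - h / 2) :
    (∫ x' in (xi' - h / 2)..(xi' + h / 2), ∫ y' in (yj' - h / 2)..(yj' + h / 2),
        1 / Real.sqrt ((xi - x') ^ 2 + (yj - y') ^ 2)) =
      |xp| * Real.arsinh (yp / xp) + |yp| * Real.arsinh (xp / yp)
      - |xm| * Real.arsinh (yp / xm) - |yp| * Real.arsinh (xm / yp)
      - |xp| * Real.arsinh (ym / xp) - |ym| * Real.arsinh (xp / ym)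
      + |xm| * Real.arsinh (ym / xm) + |ym| * Real.arsinh (xm / ym) := by
  obtain ⟨hxp', hxm', hyp', hym'⟩ : xi - (xi' - h / 2) = xp ∧ xi - (xi' + h / 2) = xm ∧
      yj - (yj' - h / 2) = yp ∧ yj - (yj' + h / 2) = ym := by
    refine ⟨?_, ?_, ?_, ?_⟩ <;> linarith
  have hinner : ∀ x' ≠ xi, ∫ y' in (yj' - h / 2)..(yj' + h / 2),
      1 / √((xi - x') ^ 2 + (yj - y') ^ 2) = arsinh (yp / |xi - x'|) - arsinh (ym / |xi - x'|) := by
    intro x' hx'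
    rw [integral_comp_sub_left (fun t => 1 / √((xi - x') ^ 2 + t ^ 2)) yj,
      hyp', hym', integral_one_div_sqrt_sq_add_sq (sub_ne_zero.2 hx'.symm)]
  calc _ = ∫ x' in (xi' - h / 2)..(xi' + h / 2),
        arsinh (yp / |xi - x'|) - arsinh (ym / |xi - x'|) :=
        integral_congr_ae <| (Measure.ae_ne volume xi).mono fun x' hx' _ => hinner x' hx'
    _ = ∫ x in xm..xp, arsinh (yp / |x|) - arsinh (ym / |x|) := by
        rw [integral_comp_sub_left (fun x => arsinh (yp / |x|) - arsinh (ym / |x|)) xi, hxp', hxm']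
    _ = _ := by
        rw [integral_sub (intervalIntegrable_arsinh_div_abs ..)
          (intervalIntegrable_arsinh_div_abs ..), integral_arsinh_div_abs, integral_arsinh_div_abs]
        simp only [kernelAntideriv]
        ring

/-- Closed-form evaluation of the elastic deformation kernel integral over a grid cell:
the integral of `1/√((xi-x')²+(yj-y')²)` over the cell centered at `(xi', yj')` equals
the eight-term `arsinh` expression, where `x± = xi - xi' ± h/2`, `y± = yj - yj' ± h/2`. -/
theorem kernel_integral_closed_form (xi yj xi' yj' h : ℝ) (hh : 0 < h)
    (xp xm yp ym : ℝ)
    (hxp : xp = xi - xi' + h / 2) (hxm : xm = xi - xi' - h / 2)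
    (hyp : yp = yj - yj' + h / 2) (hym : ym = yj - yj' - h / 2)
    (hxp0 : xp ≠ 0) (hxm0 : xm ≠ 0) (hyp0 : yp ≠ 0) (hym0 : ym ≠ 0) :
    (∫ x' in (xi' - h / 2)..(xi' + h / 2), ∫ y' in (yj' - h / 2)..(yj' + h / 2),
        1 / Real.sqrt ((xi - x') ^ 2 + (yj - y') ^ 2)) =
      |xp| * Real.arsinh (yp / xp) + |yp| * Real.arsinh (xp / yp)
      - |xm| * Real.arsinh (yp / xm) - |yp| * Real.arsinh (xm / yp)
      - |xp| * Real.arsinh (ym / xp) - |ym| * Real.arsinh (xp / ym)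
      + |xm| * Real.arsinh (ym / xm) + |ym| * Real.arsinh (xm / ym) :=
  kernel_integral_closed_form_general xi yj xi' yj' h xp xm yp ym hxp hxm hyp hym
end
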